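/- Let f : ℝ^{n×m} → ℝ be continuously differentiable, λ > 0, μ > 0. Suppose (Ū, V̄) ∈ ℝ^{n×r} × ℝ^{m×r} is a strong local minimizer of Φ_{λ,μ} (i.e. there exist α > 0 and ε > 0 such that Φ_{λ,μ}(U,V) ≥ Φ_{λ,μ}(Ū,V̄) + α‖(U,V) − (Ū,V̄)‖_F² whenever ‖(U,V) − (Ū,V̄)‖_F ≤ ε). Then J_Ū = J_V̄ =: J, and the submatrix pair (Ū_J, V̄_J) ∈ ℝ^{n×|J|} × ℝ^{m×|J|}, consisting of the nonzero columns of Ū and V̄, is a strong local minimizer of the function (A,B) ↦ f(ABᵀ) + (μ/2)(‖A‖_F² + ‖B‖_F²) on ℝ^{n×|J|} × ℝ^{m×|J|}. -/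

import Mathlib

/-!
If the `j`-th column of `V̄` vanishes but that of `Ū` does not, scaling the `j`-th column of `Ū`
by `1 - t` leaves `ŪV̄ᵀ` and both `ℓ_{2,0}` terms unchanged while lowering the Frobenius term by
order `t`, against the quadratic growth; the symmetry `(U, V, f) ↦ (V, U, f ∘ transpose)` gives the
converse, so `J_Ū = J_V̄`. Padding `(A, B)` with zero columns outside `J` then embeds the reduced
problem isometrically into the full one, preserving `F_μ` and not increasing the `ℓ_{2,0}` terms
beyond those of `(Ū, V̄)`, so the growth inequality restricts.
-/

open Filter Topology Matrix
open scoped Classical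

attribute [local instance] Matrix.frobeniusSeminormedAddCommGroup
  Matrix.frobeniusNormedAddCommGroup Matrix.frobeniusNormedSpace

/-- The Frobenius (trace) inner product `⟨A,B⟩ = trace(AᵀB) = ∑ᵢⱼ Aᵢⱼ Bᵢⱼ` on matrices. -/
noncomputable def frobInner {α β : Type*} [Fintype α] [Fintype β] (A B : Matrix α β ℝ) : ℝ :=
  ∑ i, ∑ j, A i j * B i j

/-- The column `ℓ_{2,0}`-norm: the number of nonzero columns. -/
noncomputable def l20 {α β : Type*} [Fintype α] [Fintype β] (A : Matrix α β ℝ) : ℕ :=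
  {j : β | (fun i => A i j) ≠ 0}.ncard

/-- `F_μ(U,V) = f(UVᵀ) + (μ/2)(‖U‖_F² + ‖V‖_F²)`, for factors with columns indexed
by an arbitrary finite type `γ`. -/
noncomputable def Fmu {n m : ℕ} {γ : Type*} [Fintype γ] (f : Matrix (Fin n) (Fin m) ℝ → ℝ)
    (mu : ℝ) (U : Matrix (Fin n) γ ℝ) (V : Matrix (Fin m) γ ℝ) : ℝ :=
  f (U * Vᵀ) + mu / 2 * (frobInner U U + frobInner V V)

/-- `Φ_{λ,μ}(U,V) = f(UVᵀ) + (μ/2)(‖U‖_F² + ‖V‖_F²) + λ(‖U‖_{2,0} + ‖V‖_{2,0})`. -/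
noncomputable def Phi {n m r : ℕ} (f : Matrix (Fin n) (Fin m) ℝ → ℝ) (lam mu : ℝ)
    (U : Matrix (Fin n) (Fin r) ℝ) (V : Matrix (Fin m) (Fin r) ℝ) : ℝ :=
  Fmu f mu U V + lam * ((l20 U : ℝ) + (l20 V : ℝ))

/-- The squared Frobenius norm of a pair: `‖(U,V)‖_F² = ‖U‖_F² + ‖V‖_F²`. -/
noncomputable def pairNormSq {α β γ : Type*} [Fintype α] [Fintype β] [Fintype γ]
    (U : Matrix α γ ℝ) (V : Matrix β γ ℝ) : ℝ :=
  frobInner U U + frobInner V V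

section Columns

variable {α β γ : Type*} [Fintype γ]

theorem mul_diagonal_mul_transpose [DecidableEq γ] (U : Matrix α γ ℝ) (V : Matrix β γ ℝ)
    {d : γ → ℝ} (hd : ∀ k, d k ≠ 1 → Vᵀ k = 0) :
    U * diagonal d * Vᵀ = U * Vᵀ := by
  have hV : V * diagonal d = V := by
    ext i k
    rw [mul_diagonal]
    by_cases hk : d k = 1
    · rw [hk, mul_one]
    · rw [show V i k = 0 from congrFun (hd k hk) i, zero_mul]
  rw [Matrix.mul_assoc, ← diagonal_transpose d, ← transpose_mul, hV]

variable [Fintype α] [Fintype β]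

def IsStrongLocalMin (F : Matrix α γ ℝ → Matrix β γ ℝ → ℝ) (U₀ : Matrix α γ ℝ)
    (V₀ : Matrix β γ ℝ) : Prop :=
  ∃ a > (0:ℝ), ∃ ε > (0:ℝ), ∀ U V, Real.sqrt (pairNormSq (U - U₀) (V - V₀)) ≤ ε →
    F U V ≥ F U₀ V₀ + a * pairNormSq (U - U₀) (V - V₀)

theorem pairNormSq_comm (U : Matrix α γ ℝ) (V : Matrix β γ ℝ) :
    pairNormSq U V = pairNormSq V U :=
  add_comm _ _

theorem IsStrongLocalMin.swap {F : Matrix α γ ℝ → Matrix β γ ℝ → ℝ}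
    {G : Matrix β γ ℝ → Matrix α γ ℝ → ℝ} {U₀ : Matrix α γ ℝ} {V₀ : Matrix β γ ℝ}
    (h : IsStrongLocalMin F U₀ V₀) (hGF : ∀ U V, G V U = F U V) :
    IsStrongLocalMin G V₀ U₀ := by
  obtain ⟨a, ha, ε, hε, h⟩ := h
  refine ⟨a, ha, ε, hε, fun V U hVU => ?_⟩
  rw [pairNormSq_comm] at hVU ⊢
  simpa only [hGF] using h U V hVU

theorem frobInner_self_eq_sum_dotProduct (M : Matrix α γ ℝ) :
    frobInner M M = ∑ k, Mᵀ k ⬝ᵥ Mᵀ k :=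
  Finset.sum_comm

theorem frobInner_mul_diagonal_self [DecidableEq γ] (M : Matrix α γ ℝ) (d : γ → ℝ) :
    frobInner (M * diagonal d) (M * diagonal d) = ∑ k, d k ^ 2 * (Mᵀ k ⬝ᵥ Mᵀ k) := by
  simp only [frobInner_self_eq_sum_dotProduct, dotProduct, Finset.mul_sum, transpose_apply,
    mul_diagonal]
  exact Finset.sum_congr rfl fun k _ => Finset.sum_congr rfl fun i _ => by ring

theorem l20_mul_diagonal [DecidableEq γ] (M : Matrix α γ ℝ) {d : γ → ℝ} (hd : ∀ k, d k ≠ 0) :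
    l20 (M * diagonal d) = l20 M := by
  unfold l20
  congr 1
  ext k
  have hcol : (fun i => (M * diagonal d) i k) = d k • fun i => M i k := by
    funext i
    simp [mul_diagonal, mul_comm]
  simp only [Set.mem_ofPred_eq, hcol, smul_ne_zero_iff, ne_eq, hd k, not_false_eq_true, true_and]

end Columns

section PadCols

variable {α β γ : Type*} (p : γ → Prop) [DecidablePred p]

def padCols (A : Matrix α {k // p k} ℝ) : Matrix α γ ℝ :=
  of fun i k => if h : p k then A i ⟨k, h⟩ else 0

theorem padCols_sub (A B : Matrix α {k // p k} ℝ) :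
    padCols p (A - B) = padCols p A - padCols p B := by
  ext i k
  by_cases h : p k <;> simp [padCols, h]

theorem padCols_submatrix {M : Matrix α γ ℝ} (hM : ∀ k, ¬ p k → Mᵀ k = 0) :
    padCols p (M.submatrix id Subtype.val) = M := by
  ext i k
  by_cases h : p k
  · simp [padCols, h]
  · simp [padCols, h, show M i k = 0 from congrFun (hM k h) i]

variable [Fintype γ]

theorem sum_padCols_mul_padCols (A : Matrix α {k // p k} ℝ) (B : Matrix β {k // p k} ℝ)
    (i : α) (i' : β) :
    ∑ k, padCols p A i k * padCols p B i' k = ∑ l, A i l * B i' l := by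
  have hout : ∑ k : {k // ¬ p k}, padCols p A i k * padCols p B i' k = 0 :=
    Finset.sum_eq_zero fun k _ => by simp only [padCols, of_apply, dif_neg k.2, mul_zero]
  rw [← Fintype.sum_subtype_add_sum_subtype p, hout, add_zero]
  exact Finset.sum_congr rfl fun k _ => by simp only [padCols, of_apply, dif_pos k.2]

theorem padCols_mul_transpose_padCols (A : Matrix α {k // p k} ℝ) (B : Matrix β {k // p k} ℝ) :
    padCols p A * (padCols p B)ᵀ = A * Bᵀ := by
  ext i i'
  exact sum_padCols_mul_padCols p A B i i'

variable [Fintype α]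

theorem frobInner_padCols (A B : Matrix α {k // p k} ℝ) :
    frobInner (padCols p A) (padCols p B) = frobInner A B :=
  Finset.sum_congr rfl fun i _ => sum_padCols_mul_padCols p A B i i

theorem pairNormSq_padCols [Fintype β] (A : Matrix α {k // p k} ℝ) (B : Matrix β {k // p k} ℝ) :
    pairNormSq (padCols p A) (padCols p B) = pairNormSq A B := by
  simp only [pairNormSq, frobInner_padCols]

theorem l20_padCols_le (A : Matrix α {k // p k} ℝ) : l20 (padCols p A) ≤ {k | p k}.ncard := by
  refine Set.ncard_le_ncard (fun k hk => ?_) (Set.toFinite _)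
  by_contra h
  exact hk (funext fun i => dif_neg h)

end PadCols

section Factorization

variable {n m r : ℕ} (f : Matrix (Fin n) (Fin m) ℝ → ℝ)

theorem Fmu_padCols {γ : Type*} [Fintype γ] (mu : ℝ) (p : γ → Prop) [DecidablePred p]
    (A : Matrix (Fin n) {k // p k} ℝ) (B : Matrix (Fin m) {k // p k} ℝ) :
    Fmu f mu (padCols p A) (padCols p B) = Fmu f mu A B := by
  simp only [Fmu, padCols_mul_transpose_padCols, frobInner_padCols]

theorem Fmu_mul_diagonal {γ : Type*} [Fintype γ] [DecidableEq γ] (mu : ℝ)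
    (U : Matrix (Fin n) γ ℝ) (V : Matrix (Fin m) γ ℝ) {d : γ → ℝ} (hd : ∀ k, d k ≠ 1 → Vᵀ k = 0) :
    Fmu f mu (U * diagonal d) V =
      Fmu f mu U V + mu / 2 * ∑ k, (d k ^ 2 - 1) * (Uᵀ k ⬝ᵥ Uᵀ k) := by
  simp only [Fmu, mul_diagonal_mul_transpose U V hd, frobInner_mul_diagonal_self,
    frobInner_self_eq_sum_dotProduct U, sub_mul, Finset.sum_sub_distrib, one_mul]
  ring

theorem Phi_transpose (lam mu : ℝ) (U : Matrix (Fin n) (Fin r) ℝ) (V : Matrix (Fin m) (Fin r) ℝ) :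
    Phi (fun X => f Xᵀ) lam mu V U = Phi f lam mu U V := by
  simp only [Phi, Fmu, transpose_mul, transpose_transpose]
  ring

theorem col_eq_zero_of_isStrongLocalMin_Phi {lam mu : ℝ} (hmu : 0 < mu)
    {Ubar : Matrix (Fin n) (Fin r) ℝ} {Vbar : Matrix (Fin m) (Fin r) ℝ}
    (hmin : IsStrongLocalMin (Phi f lam mu) Ubar Vbar) (j : Fin r) (hV : Vbarᵀ j = 0) :
    Ubarᵀ j = 0 := by
  obtain ⟨a, ha, ε, hε, hloc⟩ := hmin
  by_contra hU
  set c := Ubarᵀ j ⬝ᵥ Ubarᵀ j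
  have hc : 0 < c := lt_of_le_of_ne (Finset.sum_nonneg fun i _ => mul_self_nonneg _)
    (Ne.symm (mt dotProduct_self_eq_zero.mp hU))
  set t := min (ε / √c) (1 / 2)
  have ht0 : 0 < t := lt_min (by positivity) (by norm_num)
  have ht1 : t < 1 := (min_le_right _ _).trans_lt (by norm_num)
  set d := Function.update (1 : Fin r → ℝ) j (1 - t)
  have hd0 : ∀ k, d k ≠ 0 := fun k => by
    by_cases hk : k = j
    · simp only [hk, d, Function.update_self]; linarith
    · simp [d, hk]
  have hd1 : ∀ k, d k ≠ 1 → Vbarᵀ k = 0 := fun k hk => by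
    by_cases hkj : k = j
    · rw [hkj, hV]
    · simp [d, hkj] at hk
  have hsum : ∀ g : ℝ → ℝ, g 1 = 0 → ∑ k, g (d k) * (Ubarᵀ k ⬝ᵥ Ubarᵀ k) = g (1 - t) * c :=
    fun g hg => by
      rw [Finset.sum_eq_single j (fun k _ hk => by simp [d, hk, hg]) (by simp)]
      simp [d, c]
  have hdist : pairNormSq (Ubar * diagonal d - Ubar) (Vbar - Vbar) = t ^ 2 * c := by
    have h := hsum (fun x => (x - 1) ^ 2) (by norm_num)
    have hsub : Ubar * diagonal d - Ubar = Ubar * diagonal (d - 1) := by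
      ext i k
      simp only [Matrix.sub_apply, mul_diagonal, Pi.sub_apply, Pi.one_apply, mul_sub, mul_one]
    rw [hsub, sub_self, pairNormSq, frobInner_mul_diagonal_self]
    simpa [frobInner] using h
  have hPhi : Phi f lam mu (Ubar * diagonal d) Vbar
      = Phi f lam mu Ubar Vbar - mu / 2 * (2 * t - t ^ 2) * c := by
    have h := hsum (fun x => x ^ 2 - 1) (by norm_num)
    rw [Phi, Phi, Fmu_mul_diagonal f mu Ubar Vbar hd1, l20_mul_diagonal Ubar hd0, h]
    ring
  have hclose : √(pairNormSq (Ubar * diagonal d - Ubar) (Vbar - Vbar)) ≤ ε := by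
    rw [hdist, Real.sqrt_mul (sq_nonneg t), Real.sqrt_sq ht0.le]
    calc t * √c ≤ ε / √c * √c := by gcongr; exact min_le_left _ _
      _ = ε := div_mul_cancel₀ ε (Real.sqrt_pos.mpr hc).ne'
  have hdecrease : 0 < mu / 2 * (2 * t - t ^ 2) * c := by
    have : 0 < 2 * t - t ^ 2 := by nlinarith
    positivity
  have hgrowth := hloc _ Vbar hclose
  rw [hPhi, hdist] at hgrowth
  nlinarith [mul_pos ha (mul_pos (pow_pos ht0 2) hc)]

theorem isStrongLocalMin_Fmu_submatrix {lam mu : ℝ} (hlam : 0 ≤ lam)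
    {Ubar : Matrix (Fin n) (Fin r) ℝ} {Vbar : Matrix (Fin m) (Fin r) ℝ}
    (hmin : IsStrongLocalMin (Phi f lam mu) Ubar Vbar) (p : Fin r → Prop) [DecidablePred p]
    (hU : ∀ k, p k ↔ Ubarᵀ k ≠ 0) (hV : ∀ k, p k ↔ Vbarᵀ k ≠ 0) :
    IsStrongLocalMin (Fmu f mu) (Ubar.submatrix id Subtype.val : Matrix _ {k // p k} ℝ)
      (Vbar.submatrix id Subtype.val) := by
  obtain ⟨a, ha, ε, hε, hloc⟩ := hmin
  set A₀ : Matrix (Fin n) {k // p k} ℝ := Ubar.submatrix id Subtype.val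
  set B₀ : Matrix (Fin m) {k // p k} ℝ := Vbar.submatrix id Subtype.val
  have hUbar : padCols p A₀ = Ubar :=
    padCols_submatrix p fun k hk => not_not.mp (mt (hU k).mpr hk)
  have hVbar : padCols p B₀ = Vbar :=
    padCols_submatrix p fun k hk => not_not.mp (mt (hV k).mpr hk)
  have hl20U : l20 Ubar = {k | p k}.ncard := congrArg Set.ncard (Set.ext fun k => (hU k).symm)
  have hl20V : l20 Vbar = {k | p k}.ncard := congrArg Set.ncard (Set.ext fun k => (hV k).symm)
  have hFmu : Fmu f mu Ubar Vbar = Fmu f mu A₀ B₀ := by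
    rw [← Fmu_padCols f mu p A₀ B₀, hUbar, hVbar]
  refine ⟨a, ha, ε, hε, fun A B hAB => ?_⟩
  have hdist : pairNormSq (padCols p A - Ubar) (padCols p B - Vbar)
      = pairNormSq (A - A₀) (B - B₀) := by
    rw [← hUbar, ← hVbar, ← padCols_sub, ← padCols_sub, pairNormSq_padCols]
  have hgrowth := hloc (padCols p A) (padCols p B) (hdist ▸ hAB)
  rw [Phi, Phi, Fmu_padCols, hFmu, hl20U, hl20V, hdist] at hgrowth
  have hl20 : lam * ((l20 (padCols p A) : ℝ) + l20 (padCols p B))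
      ≤ lam * (({k | p k}.ncard : ℝ) + {k | p k}.ncard) := by
    gcongr <;> exact_mod_cast l20_padCols_le p _
  linarith

end Factorization

theorem strong_local_min_Phi_imp_Fmu_general {n m r : ℕ}
    (f : Matrix (Fin n) (Fin m) ℝ → ℝ)
    (lam mu : ℝ) (hlam : 0 < lam) (hmu : 0 < mu)
    (Ubar : Matrix (Fin n) (Fin r) ℝ) (Vbar : Matrix (Fin m) (Fin r) ℝ)
    (hmin : ∃ α > (0:ℝ), ∃ ε > (0:ℝ), ∀ (U : Matrix (Fin n) (Fin r) ℝ)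
        (V : Matrix (Fin m) (Fin r) ℝ),
        Real.sqrt (pairNormSq (U - Ubar) (V - Vbar)) ≤ ε →
        Phi f lam mu U V ≥ Phi f lam mu Ubar Vbar + α * pairNormSq (U - Ubar) (V - Vbar)) :
    (∀ j : Fin r, (fun i => Ubar i j) ≠ 0 ↔ (fun i => Vbar i j) ≠ 0) ∧
      (∃ α' > (0:ℝ), ∃ δ > (0:ℝ),
        ∀ (A : Matrix (Fin n) {j : Fin r // (fun i => Ubar i j) ≠ 0} ℝ)
          (B : Matrix (Fin m) {j : Fin r // (fun i => Ubar i j) ≠ 0} ℝ),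
          Real.sqrt (pairNormSq (A - Matrix.of fun i j => Ubar i j.1)
            (B - Matrix.of fun i j => Vbar i j.1)) ≤ δ →
          Fmu f mu A B ≥
            Fmu f mu (Matrix.of fun i (j : {j : Fin r // (fun i => Ubar i j) ≠ 0}) => Ubar i j.1)
              (Matrix.of fun i j => Vbar i j.1) +
            α' * pairNormSq (A - Matrix.of fun i j => Ubar i j.1)
              (B - Matrix.of fun i j => Vbar i j.1)) := by
  replace hmin : IsStrongLocalMin (Phi f lam mu) Ubar Vbar := hmin
  have hJ : ∀ j : Fin r, (fun i => Ubar i j) ≠ 0 ↔ (fun i => Vbar i j) ≠ 0 := fun j =>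
    ⟨mt (col_eq_zero_of_isStrongLocalMin_Phi f hmu hmin j),
      mt (col_eq_zero_of_isStrongLocalMin_Phi (fun X => f Xᵀ) hmu
        (hmin.swap (Phi_transpose f lam mu)) j)⟩
  exact ⟨hJ, isStrongLocalMin_Fmu_submatrix f hlam.le hmin _ (fun _ => Iff.rfl) hJ⟩

/-- if `(Ū,V̄)` is a strong local minimizer of `Φ_{λ,μ}`, then `J_Ū = J_V̄ =: J`
and the submatrix pair `(Ū_J, V̄_J)` of nonzero columns is a strong local minimizer of
`(A,B) ↦ f(ABᵀ) + (μ/2)(‖A‖_F² + ‖B‖_F²)` on `ℝ^{n×|J|} × ℝ^{m×|J|}`. -/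
theorem strong_local_min_Phi_imp_Fmu {n m r : ℕ}
    (f : Matrix (Fin n) (Fin m) ℝ → ℝ) (hf : ContDiff ℝ 1 f)
    (lam mu : ℝ) (hlam : 0 < lam) (hmu : 0 < mu)
    (Ubar : Matrix (Fin n) (Fin r) ℝ) (Vbar : Matrix (Fin m) (Fin r) ℝ)
    (hmin : ∃ α > (0:ℝ), ∃ ε > (0:ℝ), ∀ (U : Matrix (Fin n) (Fin r) ℝ)
        (V : Matrix (Fin m) (Fin r) ℝ),
        Real.sqrt (pairNormSq (U - Ubar) (V - Vbar)) ≤ ε →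
        Phi f lam mu U V ≥ Phi f lam mu Ubar Vbar + α * pairNormSq (U - Ubar) (V - Vbar)) :
    (∀ j : Fin r, (fun i => Ubar i j) ≠ 0 ↔ (fun i => Vbar i j) ≠ 0) ∧
      (∃ α' > (0:ℝ), ∃ δ > (0:ℝ),
        ∀ (A : Matrix (Fin n) {j : Fin r // (fun i => Ubar i j) ≠ 0} ℝ)
          (B : Matrix (Fin m) {j : Fin r // (fun i => Ubar i j) ≠ 0} ℝ),
          Real.sqrt (pairNormSq (A - Matrix.of fun i j => Ubar i j.1)
            (B - Matrix.of fun i j => Vbar i j.1)) ≤ δ →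
          Fmu f mu A B ≥
            Fmu f mu (Matrix.of fun i (j : {j : Fin r // (fun i => Ubar i j) ≠ 0}) => Ubar i j.1)
              (Matrix.of fun i j => Vbar i j.1) +
            α' * pairNormSq (A - Matrix.of fun i j => Ubar i j.1)
              (B - Matrix.of fun i j => Vbar i j.1)) :=
  strong_local_min_Phi_imp_Fmu_general f lam mu hlam hmu Ubar Vbar hmin
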